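/- arXiv:2206.05100 — 2 statements merged into one kernel-verified Lean document; each statement's English description precedes it below -/
import Mathlib

section
/- If the final zone F of M_•^{F₁,F₂} is not contained in ([m]×{0}) ∪ ({0}×[n]) (i.e., F contains a cell (i,j) with i ≠ 0 and j ≠ 0), then a nonempty state T of M_•^{F₁,F₂} is accessible if and only if T is valid. -/
/-- The final zone `F = (F₁×[n]) • ([m]×F₂)` determined by a binary Boolean
function `b` and final sets `F₁`, `F₂`. -/
def finalZone {m n : ℕ} (b : Bool → Bool → Bool)
    (F₁ : Finset (Fin m)) (F₂ : Finset (Fin n)) : Set (Fin m × Fin n) :=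
  {p | b (decide (p.1 ∈ F₁)) (decide (p.2 ∈ F₂)) = true}

/-- The action of a pair of transformations on a tableau:
`T·(f,g) = {(f i, g j) | (i,j) ∈ T}`. -/
def act {m n : ℕ} (a : (Fin m → Fin m) × (Fin n → Fin n))
    (T : Set (Fin m × Fin n)) : Set (Fin m × Fin n) :=
  (fun p => (a.1 p.1, a.2 p.2)) '' T

open Classical in
/-- One transition of the automaton `M_•^{F₁,F₂}` on tableaux: on `∅` the
letter `(f,g)` produces `{(f 0, g 0)}`, on a nonempty tableau it produces
`T·(f,g)`; in both cases the cross `(0,0)` is added whenever the resulting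
tableau meets the final zone `F`. -/
noncomputable def mstep {m n : ℕ} [NeZero m] [NeZero n]
    (F : Set (Fin m × Fin n)) (a : (Fin m → Fin m) × (Fin n → Fin n))
    (T : Set (Fin m × Fin n)) : Set (Fin m × Fin n) :=
  let T' := if T = ∅ then ({(a.1 0, a.2 0)} : Set (Fin m × Fin n)) else act a T
  if (T' ∩ F).Nonempty then insert ((0 : Fin m), (0 : Fin n)) T' else T'

/-- The extended transition function `δ^w` of `M_•^{F₁,F₂}`. -/
noncomputable def mrun {m n : ℕ} [NeZero m] [NeZero n]
    (F : Set (Fin m × Fin n)) (w : List ((Fin m → Fin m) × (Fin n → Fin n)))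
    (T : Set (Fin m × Fin n)) : Set (Fin m × Fin n) :=
  w.foldl (fun T a => mstep F a T) T

/-!
Every state produced by a transition is valid, because the cross is added exactly when the new
tableau meets `F`. Conversely, nonempty valid tableaux are built up one cell at a time. A singleton
is reached from `∅` by a constant letter. To add a cell `e ≠ (0,0)` to a reachable tableau `S`,
first apply a pair of permutations sending some cell of `S` onto a final cell `c` with `c.1 ≠ 0`,
`c.2 ≠ 0` (this creates the cross), then a letter that undoes the permutations on the rows and
columns of `S` and sends the cross to `e`. For the second letter to exist, the row (column) that
the permutation sends to `0` must be either `e.1` (`e.2`) or unused by `S`.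
-/

section Perm

variable {α : Type*}

theorem Equiv.Perm.exists_apply_eq_apply_eq {u w t t' : α} (huw : u ≠ w) (htt' : t ≠ t') :
    ∃ σ : Equiv.Perm α, σ u = t ∧ σ w = t' := by
  classical
  have hw : Equiv.swap u t w ≠ t := fun h =>
    huw ((Equiv.swap u t).injective (h.trans (Equiv.swap_apply_left u t).symm)).symm
  refine ⟨(Equiv.swap u t).trans (Equiv.swap (Equiv.swap u t w) t'), ?_, ?_⟩
  · simp only [Equiv.trans_apply, Equiv.swap_apply_left]
    exact Equiv.swap_apply_of_ne_of_ne hw.symm htt'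
  · simp only [Equiv.trans_apply, Equiv.swap_apply_left]

theorem exists_map_and_retraction {R : Set α} {o r t x : α} (hr : r ∈ R) (ht : t ≠ o)
    (h : x ≠ r ∨ ∃ w, w ∉ R) :
    ∃ σ f : α → α, σ r = t ∧ f o = x ∧ ∀ s ∈ R, f (σ s) = s := by
  classical
  obtain ⟨w, hwr, hw⟩ : ∃ w, w ≠ r ∧ (w = x ∨ w ∉ R) := by
    rcases h with h | ⟨w, hw⟩
    · exact ⟨x, h, Or.inl rfl⟩
    · exact ⟨w, (ne_of_mem_of_not_mem hr hw).symm, Or.inr hw⟩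
  obtain ⟨σ, hσr, hσw⟩ := Equiv.Perm.exists_apply_eq_apply_eq hwr.symm ht
  refine ⟨σ, fun s => if s = o then x else σ.symm s, hσr, if_pos rfl, fun s hs => ?_⟩
  by_cases hsw : s = w
  · subst hsw
    simp only [hσw]
    exact (hw.resolve_right (not_not_intro hs)).symm
  · have hσs : σ s ≠ o := fun h => hsw (σ.injective (h.trans hσw.symm))
    simp only [if_neg hσs, Equiv.symm_apply_apply]

end Perm

/-- Either two cells of `T` differ in both coordinates, or `T` lies on a single row or column, and
any other row or column is then free. -/
theorem Set.Nontrivial.exists_removable_cell {α β : Type*} [Nontrivial α] [Nontrivial β]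
    {T : Set (α × β)} (hT : T.Nontrivial) (o : α × β) :
    ∃ e ∈ T, e ≠ o ∧ ∃ r ∈ T \ {e},
      (e.1 ≠ r.1 ∨ ∃ w, w ∉ Prod.fst '' (T \ {e})) ∧
      (e.2 ≠ r.2 ∨ ∃ z, z ∉ Prod.snd '' (T \ {e})) := by
  by_cases hgen : ∃ p ∈ T, ∃ q ∈ T, p.1 ≠ q.1 ∧ p.2 ≠ q.2
  · obtain ⟨p, hp, q, hq, h1, h2⟩ := hgen
    have hpq : p ≠ q := fun h => h1 (congrArg Prod.fst h)
    by_cases hpo : p = o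
    · refine ⟨q, hq, fun h => hpq (hpo.trans h.symm), p, ⟨hp, hpq⟩,
        Or.inl (Ne.symm h1), Or.inl (Ne.symm h2)⟩
    · exact ⟨p, hp, hpo, q, ⟨hq, hpq.symm⟩, Or.inl h1, Or.inl h2⟩
  push Not at hgen
  obtain ⟨e, he, heo⟩ := hT.exists_ne o
  obtain ⟨r, hr, hre⟩ := hT.exists_ne e
  refine ⟨e, he, heo, r, ⟨hr, hre⟩, ?_⟩
  by_cases h1 : e.1 = r.1
  · have h2 : e.2 ≠ r.2 := fun h2 => hre (Prod.ext h1 h2).symm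
    have hrow : ∀ s ∈ T, s.1 = e.1 := fun s hs => by
      by_contra hs1
      exact h2 ((hgen e he s hs (Ne.symm hs1)).trans
        (hgen r hr s hs (h1 ▸ Ne.symm hs1)).symm)
    obtain ⟨w, hw⟩ := _root_.exists_ne e.1
    exact ⟨Or.inr ⟨w, fun ⟨s, hs, hsw⟩ => hw (hsw ▸ hrow s hs.1)⟩, Or.inl h2⟩
  · have h2 : e.2 = r.2 := hgen e he r hr h1
    have hcol : ∀ s ∈ T, s.2 = e.2 := fun s hs => by
      by_contra hs2
      have hs1 : s.1 = e.1 := by_contra fun h => hs2 (hgen e he s hs (Ne.symm h)).symm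
      exact hs2 (h2 ▸ hgen r hr s hs (hs1 ▸ Ne.symm h1)).symm
    obtain ⟨z, hz⟩ := _root_.exists_ne e.2
    exact ⟨Or.inl h1, Or.inr ⟨z, fun ⟨s, hs, hsz⟩ => hz (hsz ▸ hcol s hs.1)⟩⟩

theorem act_insert {m n : ℕ} (a : (Fin m → Fin m) × (Fin n → Fin n)) (p : Fin m × Fin n)
    (T : Set (Fin m × Fin n)) : act a (insert p T) = insert (a.1 p.1, a.2 p.2) (act a T) :=
  Set.image_insert_eq

section Automaton

variable {m n : ℕ} [NeZero m] [NeZero n] {F : Set (Fin m × Fin n)}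

def IsValidTableau (F : Set (Fin m × Fin n)) (T : Set (Fin m × Fin n)) : Prop :=
  T ∩ F = ∅ ∨ ((0 : Fin m), (0 : Fin n)) ∈ T

open Classical in
noncomputable def addCross (F : Set (Fin m × Fin n)) (T : Set (Fin m × Fin n)) :
    Set (Fin m × Fin n) :=
  if (T ∩ F).Nonempty then insert ((0 : Fin m), (0 : Fin n)) T else T

theorem isValidTableau_addCross (T : Set (Fin m × Fin n)) : IsValidTableau F (addCross F T) := by
  unfold addCross
  split_ifs with h
  · exact Or.inr (Set.mem_insert _ _)
  · exact Or.inl (Set.not_nonempty_iff_eq_empty.mp h)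

theorem addCross_of_isValidTableau {T : Set (Fin m × Fin n)} (hT : IsValidTableau F T) :
    addCross F T = T := by
  unfold addCross
  split_ifs with h
  · exact Set.insert_eq_of_mem (hT.resolve_left h.ne_empty)
  · rfl

theorem addCross_of_inter_nonempty {T : Set (Fin m × Fin n)} (hT : (T ∩ F).Nonempty) :
    addCross F T = insert ((0 : Fin m), (0 : Fin n)) T :=
  if_pos hT

theorem IsValidTableau.sdiff_singleton {T : Set (Fin m × Fin n)} (hT : IsValidTableau F T)
    {e : Fin m × Fin n} (he : e ≠ ((0 : Fin m), (0 : Fin n))) : IsValidTableau F (T \ {e}) := by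
  rcases hT with hT | hT
  · exact Or.inl (Set.subset_empty_iff.mp (hT ▸ Set.inter_subset_inter_left F Set.sdiff_subset))
  · exact Or.inr ⟨hT, Ne.symm he⟩

theorem mstep_empty (a : (Fin m → Fin m) × (Fin n → Fin n)) :
    mstep F a ∅ = addCross F {(a.1 0, a.2 0)} :=
  congrArg (addCross F) (if_pos rfl)

theorem mstep_of_nonempty (a : (Fin m → Fin m) × (Fin n → Fin n)) {T : Set (Fin m × Fin n)}
    (hT : T.Nonempty) : mstep F a T = addCross F (act a T) :=
  congrArg (addCross F) (if_neg hT.ne_empty)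

theorem mrun_append (w w' : List ((Fin m → Fin m) × (Fin n → Fin n))) (T : Set (Fin m × Fin n)) :
    mrun F (w ++ w') T = mrun F w' (mrun F w T) :=
  List.foldl_append

theorem isValidTableau_mrun (w : List ((Fin m → Fin m) × (Fin n → Fin n)))
    {T : Set (Fin m × Fin n)} (hT : IsValidTableau F T) : IsValidTableau F (mrun F w T) := by
  induction w generalizing T with
  | nil => exact hT
  | cons a w ih => exact ih (isValidTableau_addCross _)

theorem mrun_const_eq_singleton {e : Fin m × Fin n} (he : IsValidTableau F {e}) :
    mrun F [(fun _ => e.1, fun _ => e.2)] ∅ = {e} :=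
  (mstep_empty _).trans (addCross_of_isValidTableau he)

theorem exists_mstep_mstep_eq_insert {S : Set (Fin m × Fin n)} {c e r : Fin m × Fin n}
    (hcF : c ∈ F) (hc₁ : c.1 ≠ 0) (hc₂ : c.2 ≠ 0) (hr : r ∈ S)
    (hrow : e.1 ≠ r.1 ∨ ∃ w, w ∉ Prod.fst '' S) (hcol : e.2 ≠ r.2 ∨ ∃ z, z ∉ Prod.snd '' S)
    (hv : IsValidTableau F (insert e S)) :
    ∃ a b, mstep F b (mstep F a S) = insert e S := by
  obtain ⟨σ, f, hσ, hf, hfσ⟩ := exists_map_and_retraction (Set.mem_image_of_mem _ hr) hc₁ hrow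
  obtain ⟨τ, g, hτ, hg, hgτ⟩ := exists_map_and_retraction (Set.mem_image_of_mem _ hr) hc₂ hcol
  have hmeet : (act (σ, τ) S ∩ F).Nonempty :=
    ⟨c, ⟨r, hr, Prod.ext hσ hτ⟩, hcF⟩
  have hback : act (f, g) (act (σ, τ) S) = S := by
    simp only [act, Set.image_image]
    refine (Set.image_congr fun p hp => ?_).trans (Set.image_id' S)
    exact Prod.ext (hfσ _ (Set.mem_image_of_mem _ hp)) (hgτ _ (Set.mem_image_of_mem _ hp))
  refine ⟨(σ, τ), (f, g), ?_⟩
  rw [mstep_of_nonempty _ ⟨r, hr⟩, addCross_of_inter_nonempty hmeet,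
    mstep_of_nonempty _ (Set.insert_nonempty _ _), act_insert, hback]
  dsimp only
  rw [hf, hg]
  exact addCross_of_isValidTableau hv

theorem exists_mrun_eq_of_isValidTableau {c : Fin m × Fin n} (hcF : c ∈ F) (hc₁ : c.1 ≠ 0)
    (hc₂ : c.2 ≠ 0) {T : Set (Fin m × Fin n)} (hT : T.Nonempty) (hv : IsValidTableau F T) :
    ∃ w, mrun F w ∅ = T := by
  induction hk : T.ncard using Nat.strong_induction_on generalizing T with
  | _ k ih =>
  rcases hT.exists_eq_singleton_or_nontrivial with ⟨e, rfl⟩ | hnt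
  · exact ⟨_, mrun_const_eq_singleton hv⟩
  have : Nontrivial (Fin m) := nontrivial_of_ne _ _ hc₁
  have : Nontrivial (Fin n) := nontrivial_of_ne _ _ hc₂
  obtain ⟨e, he, heo, r, hr, hrow, hcol⟩ := hnt.exists_removable_cell (0, 0)
  obtain ⟨w, hw⟩ := ih _ (hk ▸ Set.ncard_sdiff_singleton_lt_of_mem he) ⟨r, hr⟩
    (hv.sdiff_singleton heo) rfl
  have hTe : insert e (T \ {e}) = T := by rw [Set.insert_sdiff_singleton, Set.insert_eq_of_mem he]
  obtain ⟨a, b, hab⟩ := exists_mstep_mstep_eq_insert hcF hc₁ hc₂ hr hrow hcol (by rwa [hTe])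
  refine ⟨w ++ [a, b], ?_⟩
  rw [mrun_append, hw]
  exact hab.trans hTe

end Automaton

/-- If the final zone of `M_•^{F₁,F₂}` contains a cell `(i,j)` with `i ≠ 0` and
`j ≠ 0`, then a nonempty tableau is accessible if and only if it is valid. -/
theorem accessible_iff_valid (m n : ℕ) [NeZero m] [NeZero n]
    (b : Bool → Bool → Bool) (F₁ : Finset (Fin m)) (F₂ : Finset (Fin n))
    (hF : ∃ p ∈ finalZone b F₁ F₂, p.1 ≠ 0 ∧ p.2 ≠ 0)
    (T : Set (Fin m × Fin n)) (hT : T.Nonempty) :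
    (∃ w, mrun (finalZone b F₁ F₂) w ∅ = T) ↔
      (T ∩ finalZone b F₁ F₂ = ∅ ∨ ((0 : Fin m), (0 : Fin n)) ∈ T) := by
  obtain ⟨c, hcF, hc₁, hc₂⟩ := hF
  constructor
  · rintro ⟨w, rfl⟩
    exact isValidTableau_mrun w (Or.inl (Set.empty_inter _))
  · exact exists_mrun_eq_of_isValidTableau hcF hc₁ hc₂ hT
end

section
/- Two nonempty tableaux are Nerode equivalent in M_•^{F₁,F₂} if and only if they are Nerode equivalent in the auxiliary automaton M̂_•^{F₁,F₂} with the pure action d. Moreover, in M_•^{F₁,F₂}, the empty tableau is Nerode equivalent to the state {(0,0)} if and only if (0,0) lies in the final zone. -/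
/-- The extended pure action `d^w` of the auxiliary automaton `M̂_•^{F₁,F₂}`. -/
def drun {m n : ℕ} (w : List ((Fin m → Fin m) × (Fin n → Fin n)))
    (T : Set (Fin m × Fin n)) : Set (Fin m × Fin n) :=
  w.foldl (fun T a => act a T) T

/-- The final states of the construction: the empty tableau together with the
tableaux meeting the final zone. -/
def isFinalTab {m n : ℕ} (F : Set (Fin m × Fin n)) (T : Set (Fin m × Fin n)) : Prop :=
  T = ∅ ∨ (T ∩ F).Nonempty

section NerodeAux

open Classical

variable {m n : ℕ}

private abbrev Letter (m n : ℕ) := (Fin m → Fin m) × (Fin n → Fin n)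

private lemma act_act (a c : Letter m n) (T : Set (Fin m × Fin n)) :
    act a (act c T) = act (a.1 ∘ c.1, a.2 ∘ c.2) T := by
  simp [act, Set.image_image]

private lemma act_id (T : Set (Fin m × Fin n)) : act ((id, id) : Letter m n) T = T := by
  simp [act]

private lemma act_union (a : Letter m n) (S S' : Set (Fin m × Fin n)) :
    act a (S ∪ S') = act a S ∪ act a S' := Set.image_union _ _ _

private lemma drun_cons (a : Letter m n) (w : List (Letter m n)) (T : Set (Fin m × Fin n)) :
    drun (a :: w) T = drun w (act a T) := rfl

private lemma drun_append_singleton (w : List (Letter m n)) (a : Letter m n)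
    (T : Set (Fin m × Fin n)) :
    drun (w ++ [a]) T = act a (drun w T) := by
  simp [drun, List.foldl_append]

private lemma drun_nonempty {T : Set (Fin m × Fin n)} (h : T.Nonempty)
    (w : List (Letter m n)) : (drun w T).Nonempty := by
  induction w generalizing T with
  | nil => exact h
  | cons a w ih => exact ih (h.image _)

/-- the composite of a word into a single letter -/
private def compw (w : List (Letter m n)) : Letter m n :=
  w.foldl (fun c a => (a.1 ∘ c.1, a.2 ∘ c.2)) (id, id)

private lemma drun_eq_act_aux (w : List (Letter m n)) :
    ∀ (c : Letter m n) (T : Set (Fin m × Fin n)),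
      drun w (act c T) = act (w.foldl (fun c a => (a.1 ∘ c.1, a.2 ∘ c.2)) c) T := by
  induction w with
  | nil => intro c T; rfl
  | cons a w ih =>
    intro c T
    rw [drun_cons, act_act, ih]
    rfl

private lemma drun_eq_act (w : List (Letter m n)) (T : Set (Fin m × Fin n)) :
    drun w T = act (compw w) T := by
  have := drun_eq_act_aux w (id, id) T
  rwa [act_id] at this

variable [NeZero m] [NeZero n] (F : Set (Fin m × Fin n))

private lemma mrun_cons (a : Letter m n) (w : List (Letter m n)) (T : Set (Fin m × Fin n)) :
    mrun F (a :: w) T = mrun F w (mstep F a T) := rfl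

private lemma mrun_append_singleton (w : List (Letter m n)) (a : Letter m n)
    (T : Set (Fin m × Fin n)) :
    mrun F (w ++ [a]) T = mstep F a (mrun F w T) := by
  simp [mrun, List.foldl_append]

private lemma mstep_of_ne {T : Set (Fin m × Fin n)} (h : T ≠ ∅) (a : Letter m n) :
    mstep F a T =
      if ((act a T) ∩ F).Nonempty then insert ((0 : Fin m), (0 : Fin n)) (act a T)
      else act a T := by
  simp only [mstep, if_neg h]

private lemma mstep_nonempty (a : Letter m n) (T : Set (Fin m × Fin n)) :
    (mstep F a T).Nonempty := by
  simp only [mstep]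
  split_ifs with h1 h2 h3
  · exact Set.insert_nonempty _ _
  · exact Set.singleton_nonempty _
  · exact Set.insert_nonempty _ _
  · exact (Set.nonempty_iff_ne_empty.2 h1).image _

private lemma mrun_nonempty {T : Set (Fin m × Fin n)} (h : T.Nonempty)
    (w : List (Letter m n)) : (mrun F w T).Nonempty := by
  induction w generalizing T with
  | nil => exact h
  | cons a w ih => exact (mrun_cons F a w T) ▸ ih (mstep_nonempty F a T)

private lemma isFinal_iff {S : Set (Fin m × Fin n)} (h : S.Nonempty) :
    isFinalTab F S ↔ (S ∩ F).Nonempty := by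
  unfold isFinalTab
  simp [Set.nonempty_iff_ne_empty.1 h]

private lemma inter_mstep_of_ne {T : Set (Fin m × Fin n)} (h : T ≠ ∅) (a : Letter m n) :
    ((mstep F a T) ∩ F).Nonempty ↔ ((act a T) ∩ F).Nonempty := by
  rw [mstep_of_ne F h]
  split_ifs with hc
  · refine iff_of_true ?_ hc
    exact hc.mono (Set.inter_subset_inter (Set.subset_insert _ _) subset_rfl)
  · exact Iff.rfl

/-- Common-cross-set decomposition: if the β-patterns of `T` and `T'` agree,
the `M`-run differs from the `d`-run by a common set `K`. -/
private lemma exists_common_K {T T' : Set (Fin m × Fin n)}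
    (hT : T.Nonempty) (hT' : T'.Nonempty)
    (hβ : ∀ w, isFinalTab F (drun w T) ↔ isFinalTab F (drun w T'))
    (w : List (Letter m n)) :
    ∃ K, mrun F w T = drun w T ∪ K ∧ mrun F w T' = drun w T' ∪ K := by
  induction w using List.reverseRecOn with
  | nil => exact ⟨∅, by simp [mrun, drun], by simp [mrun, drun]⟩
  | append_singleton w a ih =>
    obtain ⟨K, h1, h2⟩ := ih
    have hD := drun_nonempty hT w
    have hD' := drun_nonempty hT' w
    have hne : drun w T ∪ K ≠ ∅ := by
      intro h
      exact (Set.nonempty_iff_ne_empty.1 hD) (Set.union_empty_iff.1 h).1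
    have hne' : drun w T' ∪ K ≠ ∅ := by
      intro h
      exact (Set.nonempty_iff_ne_empty.1 hD') (Set.union_empty_iff.1 h).1
    have e1 : mrun F (w ++ [a]) T =
        if ((act a (drun w T) ∪ act a K) ∩ F).Nonempty then
          insert ((0 : Fin m), (0 : Fin n)) (act a (drun w T) ∪ act a K)
        else act a (drun w T) ∪ act a K := by
      rw [mrun_append_singleton, h1, mstep_of_ne F hne, act_union]
    have e2 : mrun F (w ++ [a]) T' =
        if ((act a (drun w T') ∪ act a K) ∩ F).Nonempty then
          insert ((0 : Fin m), (0 : Fin n)) (act a (drun w T') ∪ act a K)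
        else act a (drun w T') ∪ act a K := by
      rw [mrun_append_singleton, h2, mstep_of_ne F hne', act_union]
    have hβa : ((act a (drun w T)) ∩ F).Nonempty ↔ ((act a (drun w T')) ∩ F).Nonempty := by
      have := hβ (w ++ [a])
      rwa [isFinal_iff F (drun_nonempty hT _), isFinal_iff F (drun_nonempty hT' _),
        drun_append_singleton, drun_append_singleton] at this
    have hcond : ((act a (drun w T) ∪ act a K) ∩ F).Nonempty ↔
        ((act a (drun w T') ∪ act a K) ∩ F).Nonempty := by
      rw [Set.union_inter_distrib_right, Set.union_inter_distrib_right,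
        Set.union_nonempty, Set.union_nonempty, hβa]
    by_cases hc : ((act a (drun w T) ∪ act a K) ∩ F).Nonempty
    · refine ⟨insert ((0 : Fin m), (0 : Fin n)) (act a K), ?_, ?_⟩
      · rw [e1, if_pos hc, drun_append_singleton, Set.union_insert]
      · rw [e2, if_pos (hcond.1 hc), drun_append_singleton, Set.union_insert]
    · refine ⟨act a K, ?_, ?_⟩
      · rw [e1, if_neg hc, drun_append_singleton]
      · rw [e2, if_neg (fun h => hc (hcond.2 h)), drun_append_singleton]

private lemma mstep_empty_eq (a : Letter m n) :
    mstep F a ∅ = mstep F a ({((0 : Fin m), (0 : Fin n))} : Set (Fin m × Fin n)) := by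
  simp [mstep, act, Set.singleton_ne_empty]

end NerodeAux

/-- Two nonempty tableaux are Nerode equivalent in `M_•^{F₁,F₂}` iff they are
Nerode equivalent in the auxiliary automaton `M̂_•^{F₁,F₂}`; moreover `∅` is
Nerode equivalent to `{(0,0)}` in `M_•^{F₁,F₂}` iff `(0,0)` is in the final
zone. -/
theorem nerode_iff_nerode_hat (m n : ℕ) [NeZero m] [NeZero n]
    (b : Bool → Bool → Bool) (F₁ : Finset (Fin m)) (F₂ : Finset (Fin n)) :
    (∀ T T' : Set (Fin m × Fin n), T.Nonempty → T'.Nonempty →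
      ((∀ w, isFinalTab (finalZone b F₁ F₂) (mrun (finalZone b F₁ F₂) w T) ↔
          isFinalTab (finalZone b F₁ F₂) (mrun (finalZone b F₁ F₂) w T')) ↔
        (∀ w, isFinalTab (finalZone b F₁ F₂) (drun w T) ↔
          isFinalTab (finalZone b F₁ F₂) (drun w T')))) ∧
    ((∀ w, isFinalTab (finalZone b F₁ F₂) (mrun (finalZone b F₁ F₂) w ∅) ↔
        isFinalTab (finalZone b F₁ F₂)
          (mrun (finalZone b F₁ F₂) w {((0 : Fin m), (0 : Fin n))})) ↔
      ((0 : Fin m), (0 : Fin n)) ∈ finalZone b F₁ F₂) := by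
  constructor
  · intro T T' hT hT'
    constructor
    · -- M-equivalence implies M̂-equivalence
      intro hM w
      have hTne : T ≠ ∅ := hT.ne_empty
      have hT'ne : T' ≠ ∅ := hT'.ne_empty
      have key := hM [compw w]
      rw [isFinal_iff _ (mrun_nonempty _ hT _), isFinal_iff _ (mrun_nonempty _ hT' _),
        show mrun (finalZone b F₁ F₂) [compw w] T = mstep (finalZone b F₁ F₂) (compw w) T
          from rfl,
        show mrun (finalZone b F₁ F₂) [compw w] T' = mstep (finalZone b F₁ F₂) (compw w) T'
          from rfl,
        inter_mstep_of_ne _ hTne, inter_mstep_of_ne _ hT'ne] at key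
      rw [isFinal_iff _ (drun_nonempty hT w), isFinal_iff _ (drun_nonempty hT' w),
        drun_eq_act w T, drun_eq_act w T']
      exact key
    · -- M̂-equivalence implies M-equivalence
      intro hβ w
      obtain ⟨K, h1, h2⟩ := exists_common_K _ hT hT' hβ w
      have hb := hβ w
      rw [isFinal_iff _ (drun_nonempty hT w), isFinal_iff _ (drun_nonempty hT' w)] at hb
      rw [isFinal_iff _ (mrun_nonempty _ hT w), isFinal_iff _ (mrun_nonempty _ hT' w),
        h1, h2, Set.union_inter_distrib_right, Set.union_inter_distrib_right,
        Set.union_nonempty, Set.union_nonempty, hb]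
  · constructor
    · intro h
      have h0 := h []
      have hfin : isFinalTab (finalZone b F₁ F₂) {((0 : Fin m), (0 : Fin n))} :=
        h0.mp (Or.inl rfl)
      rcases hfin with h' | h'
      · exact absurd h' (Set.singleton_ne_empty _)
      · rcases h' with ⟨p, hp1, hp2⟩
        rw [Set.mem_singleton_iff] at hp1
        rwa [hp1] at hp2
    · intro h0 w
      cases w with
      | nil =>
        exact iff_of_true (Or.inl rfl)
          (Or.inr ⟨((0 : Fin m), (0 : Fin n)), rfl, h0⟩)
      | cons a w =>
        rw [mrun_cons, mrun_cons, mstep_empty_eq]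
end
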